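/- arXiv:2004.13999 — 3 statements merged into one kernel-verified Lean document; each statement's English description precedes it below -/
import Mathlib

section
/- Let E = EuclideanSpace ℝ (Fin (2*M)), let P : E ≃ₗᵢ[ℝ] E be a linear isometry equivalence with P ∘ P = id, let C : (EuclideanSpace ℝ (Fin N)) →ₗ[ℝ] E be a linear map, and let H = range C ⊔ range (P.toLinearMap ∘ₗ C) with orthogonal projection Π onto H. Let d ∈ H and c ∈ ℝ. Suppose sequences λ : ℕ → E and x : ℕ → EuclideanSpace ℝ (Fin N) satisfy λ(k+1) = P (λ k) + c • (C (x (k+1)) + P (C (x k)) − 2 • d) for all k. Then for all k, (λ k) − Π (λ k) = P^[k] ((λ 0) − Π (λ 0)); that is, the component of the dual variable in the non-convergent subspace Hᗮ is, at every iteration k, exactly the k-fold application of P to the non-convergent component of the initial dual variable. -/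
/-!
An involution `P` maps `H = range C ⊔ P (range C)` onto itself; being an isometry it then maps
`Hᗮ` onto `Hᗮ` as well, so it commutes with the projection onto `Hᗮ`. Each PDMM update adds
to `P λᵏ` a vector of `H`, which that projection kills, so the `Hᗮ`-component is just
transported by `P`.
-/

open Submodule

theorem Submodule.map_sup_map_of_involutive {R M : Type*} [Semiring R] [AddCommMonoid M]
    [Module R M] (P : M ≃ₗ[R] M) (hP : Function.Involutive P) (K : Submodule R M) :
    (K ⊔ K.map (P : M →ₗ[R] M)).map (P : M →ₗ[R] M) = K ⊔ K.map (P : M →ₗ[R] M) := by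
  have hPP : (P : M →ₗ[R] M) ∘ₗ (P : M →ₗ[R] M) = LinearMap.id := LinearMap.ext hP
  rw [map_sup, ← map_comp, hPP, map_id, sup_comm]

section

variable {𝕜 E : Type*} [RCLike 𝕜] [NormedAddCommGroup E] [InnerProductSpace 𝕜 E]

theorem Submodule.starProjection_map_apply_of_map_eq (f : E ≃ₗᵢ[𝕜] E) {K : Submodule 𝕜 E}
    [K.HasOrthogonalProjection] (hK : K.map (f.toLinearEquiv : E →ₗ[𝕜] E) = K) (x : E) :
    K.starProjection (f x) = f (K.starProjection x) := by
  simpa [hK] using starProjection_map_apply f K (f x)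

theorem Submodule.starProjection_orthogonal_iterate (f : E ≃ₗᵢ[𝕜] E) {K : Submodule 𝕜 E}
    [K.HasOrthogonalProjection] (hK : K.map (f.toLinearEquiv : E →ₗ[𝕜] E) = K) (lam : ℕ → E)
    (hlam : ∀ k, lam (k + 1) - f (lam k) ∈ K) (k : ℕ) :
    Kᗮ.starProjection (lam k) = f^[k] (Kᗮ.starProjection (lam 0)) := by
  have hKperp : Kᗮ.map (f.toLinearEquiv : E →ₗ[𝕜] E) = Kᗮ := by rw [map_orthogonal_equiv, hK]
  induction k with
  | zero => rfl
  | succ k ih =>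
    calc Kᗮ.starProjection (lam (k + 1))
        = Kᗮ.starProjection (lam (k + 1) - f (lam k)) + Kᗮ.starProjection (f (lam k)) := by
          rw [← map_add, sub_add_cancel]
      _ = f (Kᗮ.starProjection (lam k)) := by
          rw [starProjection_orthogonal_apply_eq_zero (hlam k), zero_add,
            starProjection_map_apply_of_map_eq f hKperp]
      _ = f^[k + 1] (Kᗮ.starProjection (lam 0)) := by
          rw [ih, Function.iterate_succ_apply']

end

/-- Equation (12) of the paper: under the PDMM dual update
`λ^{k+1} = P λ^k + c (C x^{k+1} + P (C x^k) − 2d)` with `P` an orthogonal involution,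
`H = range C ⊔ range (P C)` and `d ∈ H`, the component of the dual variable in the
non-convergent subspace `Hᗮ` at iteration `k` is exactly `P^[k]` applied to the non-convergent
component of the initial dual variable. -/
theorem pdmm_nonconvergent_component {M N : ℕ}
    (P : EuclideanSpace ℝ (Fin (2 * M)) ≃ₗᵢ[ℝ] EuclideanSpace ℝ (Fin (2 * M)))
    (hP : (⇑P) ∘ (⇑P) = id)
    (C : EuclideanSpace ℝ (Fin N) →ₗ[ℝ] EuclideanSpace ℝ (Fin (2 * M)))
    (H : Submodule ℝ (EuclideanSpace ℝ (Fin (2 * M))))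
    (hH : H = LinearMap.range C ⊔ LinearMap.range (P.toLinearEquiv.toLinearMap ∘ₗ C))
    (d : EuclideanSpace ℝ (Fin (2 * M))) (hd : d ∈ H) (c : ℝ)
    (lam : ℕ → EuclideanSpace ℝ (Fin (2 * M))) (x : ℕ → EuclideanSpace ℝ (Fin N))
    (hup : ∀ k, lam (k + 1) = P (lam k)
      + c • (C (x (k + 1)) + P (C (x k)) - (2 : ℝ) • d)) :
    ∀ k, lam k - (orthogonalProjection H (lam k) : EuclideanSpace ℝ (Fin (2 * M)))
      = (⇑P)^[k] (lam 0 - (orthogonalProjection H (lam 0) :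
          EuclideanSpace ℝ (Fin (2 * M)))) := by
  have hC : ∀ y, C y ∈ H := fun y => hH ▸ mem_sup_left ⟨y, rfl⟩
  have hPC : ∀ y, P (C y) ∈ H := fun y => hH ▸ mem_sup_right ⟨y, rfl⟩
  have hPH : H.map (P.toLinearEquiv : _ →ₗ[ℝ] _) = H := by
    rw [hH, LinearMap.range_comp, map_sup_map_of_involutive _ (congrFun hP)]
  have hstep : ∀ k, lam (k + 1) - P (lam k) ∈ H := fun k => by
    rw [hup k, add_sub_cancel_left]
    exact smul_mem _ _ (sub_mem (add_mem (hC _) (hPC _)) (smul_mem _ _ hd))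
  intro k
  have h := starProjection_orthogonal_iterate P hPH lam hstep k
  rwa [starProjection_orthogonal_val, starProjection_orthogonal_val] at h
end

section
/- Let E = EuclideanSpace ℝ (Fin d), let P : E ≃ₗᵢ[ℝ] E be a linear isometry equivalence with P ∘ P = id, let C : F →ₗ[ℝ] E be a linear map from a finite-dimensional real inner product space F, and let H = range C ⊔ range (P.toLinearMap ∘ₗ C) with orthogonal projection Π onto H. Then for every λ ∈ E and every x ∈ F, ⟪P (λ − Π λ), C x⟫ = 0; equivalently, ⟪P λ, C x⟫ = ⟪P (Π λ), C x⟫. -/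
open Submodule

open scoped RealInnerProductSpace

section

variable {𝕜 E : Type*} [RCLike 𝕜] [NormedAddCommGroup E] [InnerProductSpace 𝕜 E]

theorem LinearIsometryEquiv.inner_map_eq_of_involutive {P : E ≃ₗᵢ[𝕜] E}
    (hP : Function.Involutive P) (v w : E) : inner 𝕜 (P v) w = inner 𝕜 v (P w) := by
  rw [P.inner_map_eq_flip, P.symm_apply_eq.mpr (hP w).symm]

theorem inner_map_sub_starProjection_eq_zero {K : Submodule 𝕜 E} [K.HasOrthogonalProjection]
    {P : E ≃ₗᵢ[𝕜] E} (hP : Function.Involutive P) {w : E} (hw : P w ∈ K) (v : E) :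
    inner 𝕜 (P (v - K.starProjection v)) w = 0 := by
  rw [P.inner_map_eq_of_involutive hP, inner_eq_zero_symm]
  exact K.sub_starProjection_mem_orthogonal v _ hw

end

theorem nonconvergent_component_orthogonal_general {d : ℕ} {F : Type*}
    [NormedAddCommGroup F] [InnerProductSpace ℝ F]
    (P : EuclideanSpace ℝ (Fin d) ≃ₗᵢ[ℝ] EuclideanSpace ℝ (Fin d))
    (hP : (⇑P) ∘ (⇑P) = id)
    (C : F →ₗ[ℝ] EuclideanSpace ℝ (Fin d))
    (H : Submodule ℝ (EuclideanSpace ℝ (Fin d)))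
    (hH : H = LinearMap.range C ⊔ LinearMap.range (P.toLinearEquiv.toLinearMap ∘ₗ C)) :
    ∀ (lam : EuclideanSpace ℝ (Fin d)) (x : F),
      ⟪P (lam - (orthogonalProjection H lam : EuclideanSpace ℝ (Fin d))), C x⟫ = 0 ∧
      ⟪P lam, C x⟫
        = ⟪P ((orthogonalProjection H lam : EuclideanSpace ℝ (Fin d))), C x⟫ := by
  intro lam x
  have hPCx : P (C x) ∈ H := hH ▸ mem_sup_right ⟨x, rfl⟩
  have hresidual := inner_map_sub_starProjection_eq_zero (congrFun hP) hPCx lam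
  refine ⟨hresidual, ?_⟩
  rwa [map_sub, inner_sub_left, sub_eq_zero] at hresidual

/-- Remark 3 of the paper: with `H = range C ⊔ range (P C)` for an orthogonal involution `P`,
the non-convergent component of the dual variable is orthogonal (after applying `P`) to every
vector `C x`: `⟪P (λ − Π λ), C x⟫ = 0`, equivalently `⟪P λ, C x⟫ = ⟪P (Π λ), C x⟫`. Hence the
primal update is independent of the non-convergent component. -/
theorem nonconvergent_component_orthogonal {d : ℕ} {F : Type*}
    [NormedAddCommGroup F] [InnerProductSpace ℝ F] [FiniteDimensional ℝ F]
    (P : EuclideanSpace ℝ (Fin d) ≃ₗᵢ[ℝ] EuclideanSpace ℝ (Fin d))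
    (hP : (⇑P) ∘ (⇑P) = id)
    (C : F →ₗ[ℝ] EuclideanSpace ℝ (Fin d))
    (H : Submodule ℝ (EuclideanSpace ℝ (Fin d)))
    (hH : H = LinearMap.range C ⊔ LinearMap.range (P.toLinearEquiv.toLinearMap ∘ₗ C)) :
    ∀ (lam : EuclideanSpace ℝ (Fin d)) (x : F),
      ⟪P (lam - (orthogonalProjection H lam : EuclideanSpace ℝ (Fin d))), C x⟫ = 0 ∧
      ⟪P lam, C x⟫
        = ⟪P ((orthogonalProjection H lam : EuclideanSpace ℝ (Fin d))), C x⟫ :=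
  nonconvergent_component_orthogonal_general P hP C H hH
end

section
/- Let Q be a real p×u matrix, y ∈ ℝ^p, let J be a finite index set with |J| = d ≥ 1, and for each j ∈ J let xⱼ ∈ ℝ^u, λⱼ ∈ ℝ^u, and εⱼ ∈ ({1, −1} : Set ℝ). Let c > 0. Then the matrix Qᵀ*Q + (c·d) • (1 : Matrix (Fin u) (Fin u) ℝ) is invertible, and the function g(x) = (1/2)‖y − Q.mulVec x‖² + Σⱼ εⱼ • ⟪λⱼ, x⟫ + (c/2) Σⱼ ‖x − xⱼ‖² has the unique minimizer x⁺ = (Qᵀ*Q + (c·d) • 1)⁻¹.mulVec (Qᵀ.mulVec y + Σⱼ (c • xⱼ − εⱼ • λⱼ)): for all x ∈ ℝ^u, g(x) ≥ g(x⁺) with equality if and only if x = x⁺. -/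
open Matrix Finset

open scoped RealInnerProductSpace

/-!
The objective is a quadratic function of `x`: `½ xᵀA x − bᵀx + C` with
`A = QᵀQ + c d I` and `b = Qᵀy + ∑ⱼ (c xⱼ − εⱼ λⱼ)`. Completing the square around the solution
`x⁺` of `A x⁺ = b` gives `g x − g x⁺ = ½ (x − x⁺)ᵀ A (x − x⁺)`, and `A` is positive definite
since `c d > 0`.
-/

section Quadratic

variable {n : Type*} [Fintype n]

theorem dotProduct_mulVec_sub_two_mul_dotProduct {R : Type*} [CommRing R] {A : Matrix n n R}
    (hA : Aᵀ = A) {x₀ b : n → R} (hb : A *ᵥ x₀ = b) (x : n → R) :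
    x ⬝ᵥ A *ᵥ x - 2 * (b ⬝ᵥ x) =
      x₀ ⬝ᵥ A *ᵥ x₀ - 2 * (b ⬝ᵥ x₀) + (x - x₀) ⬝ᵥ A *ᵥ (x - x₀) := by
  have hsymm : x₀ ⬝ᵥ A *ᵥ x = x ⬝ᵥ A *ᵥ x₀ := by
    rw [← dotProduct_transpose_mulVec, hA]
  subst hb
  simp only [mulVec_sub, dotProduct_sub, sub_dotProduct, hsymm, dotProduct_comm (A *ᵥ x₀)]
  ring

theorem Matrix.PosDef.le_and_eq_iff_of_eq_quadratic {A : Matrix n n ℝ} (hA : A.PosDef)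
    {x₀ b : n → ℝ} (hb : A *ᵥ x₀ = b) {f : (n → ℝ) → ℝ} {C : ℝ}
    (hf : ∀ x, f x = x ⬝ᵥ A *ᵥ x / 2 - b ⬝ᵥ x + C) (x : n → ℝ) :
    f x₀ ≤ f x ∧ (f x = f x₀ ↔ x = x₀) := by
  have hgap : f x - f x₀ = (x - x₀) ⬝ᵥ A *ᵥ (x - x₀) / 2 := by
    have hsymm : Aᵀ = A := (conjTranspose_eq_transpose_of_trivial A).symm.trans hA.isHermitian
    have := dotProduct_mulVec_sub_two_mul_dotProduct hsymm hb x
    rw [hf, hf]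
    linarith
  have hpos : x ≠ x₀ → 0 < (x - x₀) ⬝ᵥ A *ᵥ (x - x₀) := fun hne => by
    simpa only [star_trivial] using hA.dotProduct_mulVec_pos (sub_ne_zero.mpr hne)
  refine ⟨?_, fun heq => by_contra fun hne => ?_, fun heq => heq ▸ rfl⟩
  · rcases eq_or_ne x x₀ with rfl | hne
    · rfl
    · linarith [hpos hne]
  · linarith [hpos hne]

end Quadratic

section LeastSquares

variable {m n : Type*} [Fintype m] [Fintype n]

theorem sub_mulVec_dotProduct_self {R : Type*} [CommRing R] (Q : Matrix m n R) (y : m → R)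
    (x : n → R) :
    (y - Q *ᵥ x) ⬝ᵥ (y - Q *ᵥ x) = x ⬝ᵥ (Qᵀ * Q) *ᵥ x - 2 * (Qᵀ *ᵥ y ⬝ᵥ x) + y ⬝ᵥ y := by
  rw [← mulVec_mulVec, dotProduct_transpose_mulVec, dotProduct_comm (Qᵀ *ᵥ y),
    dotProduct_transpose_mulVec]
  simp only [dotProduct_sub, sub_dotProduct, dotProduct_comm (Q *ᵥ x) y]
  ring

theorem sum_sub_dotProduct_self {R J : Type*} [CommRing R] [Fintype J] (x : n → R)
    (z : J → n → R) :
    ∑ j, (x - z j) ⬝ᵥ (x - z j) =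
      Fintype.card J * (x ⬝ᵥ x) - 2 * ((∑ j, z j) ⬝ᵥ x) + ∑ j, z j ⬝ᵥ z j := by
  have hterm : ∀ j, (x - z j) ⬝ᵥ (x - z j) = x ⬝ᵥ x - 2 * (z j ⬝ᵥ x) + z j ⬝ᵥ z j := fun j => by
    simp only [dotProduct_sub, sub_dotProduct, dotProduct_comm x (z j)]
    ring
  simp only [hterm, sum_add_distrib, sum_sub_distrib, sum_const, card_univ, nsmul_eq_mul,
    ← mul_sum, sum_dotProduct]

theorem norm_withLp_equiv_symm_sq (w : n → ℝ) :
    ‖(WithLp.equiv 2 (n → ℝ)).symm w‖ ^ 2 = w ⬝ᵥ w := by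
  rw [← real_inner_self_eq_norm_sq, EuclideanSpace.inner_eq_star_dotProduct, star_trivial]
  rfl

theorem inner_withLp_equiv_symm (v w : n → ℝ) :
    ⟪(WithLp.equiv 2 (n → ℝ)).symm v, (WithLp.equiv 2 (n → ℝ)).symm w⟫ = v ⬝ᵥ w := by
  rw [EuclideanSpace.inner_eq_star_dotProduct, star_trivial, dotProduct_comm]
  rfl

theorem posDef_transpose_mul_self_add_smul_one [DecidableEq n] (Q : Matrix m n ℝ) {a : ℝ}
    (ha : 0 < a) : (Qᵀ * Q + a • (1 : Matrix n n ℝ)).PosDef := by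
  rw [add_comm]
  simpa only [conjTranspose_eq_transpose_of_trivial] using
    (PosDef.one.smul ha).add_posSemidef (posSemidef_conjTranspose_mul_self Q)

theorem pdmm_objective_eq_quadratic [DecidableEq n] {J : Type*} [Fintype J] (Q : Matrix m n ℝ)
    (y : m → ℝ) (xnb lam : J → n → ℝ) (ε : J → ℝ) (c : ℝ) (x : n → ℝ) :
    1 / 2 * ‖(WithLp.equiv 2 (m → ℝ)).symm (y - Q *ᵥ x)‖ ^ 2
        + ∑ j, ε j • ⟪(WithLp.equiv 2 (n → ℝ)).symm (lam j), (WithLp.equiv 2 (n → ℝ)).symm x⟫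
        + c / 2 * ∑ j, ‖(WithLp.equiv 2 (n → ℝ)).symm (x - xnb j)‖ ^ 2 =
      x ⬝ᵥ (Qᵀ * Q + (c * Fintype.card J) • (1 : Matrix n n ℝ)) *ᵥ x / 2
        - (Qᵀ *ᵥ y + ∑ j, (c • xnb j - ε j • lam j)) ⬝ᵥ x
        + (y ⬝ᵥ y / 2 + c / 2 * ∑ j, xnb j ⬝ᵥ xnb j) := by
  simp only [norm_withLp_equiv_symm_sq, inner_withLp_equiv_symm, smul_eq_mul]
  rw [sub_mulVec_dotProduct_self, sum_sub_dotProduct_self]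
  simp only [add_mulVec, smul_mulVec, one_mulVec, dotProduct_add, dotProduct_smul, add_dotProduct,
    sum_dotProduct, sub_dotProduct, smul_dotProduct, sum_sub_distrib, smul_eq_mul, ← mul_sum]
  ring

end LeastSquares

theorem pdmm_least_squares_local_update_general {p u d : ℕ} (hd : 1 ≤ d)
    {J : Type*} [Fintype J] (hJ : Fintype.card J = d)
    (Q : Matrix (Fin p) (Fin u) ℝ) (y : Fin p → ℝ)
    (xnb lam : J → (Fin u → ℝ))
    (ε : J → ℝ) (c : ℝ) (hc : 0 < c)
    (g : (Fin u → ℝ) → ℝ)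
    (hg : g = fun x => 1 / 2 * ‖(WithLp.equiv 2 (Fin p → ℝ)).symm (y - Q.mulVec x)‖ ^ 2
      + ∑ j, ε j • ⟪(WithLp.equiv 2 (Fin u → ℝ)).symm (lam j),
          (WithLp.equiv 2 (Fin u → ℝ)).symm x⟫
      + c / 2 * ∑ j, ‖(WithLp.equiv 2 (Fin u → ℝ)).symm (x - xnb j)‖ ^ 2)
    (A : Matrix (Fin u) (Fin u) ℝ)
    (hA : A = Qᵀ * Q + (c * d) • (1 : Matrix (Fin u) (Fin u) ℝ))
    (xplus : Fin u → ℝ)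
    (hxplus : xplus = A⁻¹.mulVec (Qᵀ.mulVec y + ∑ j, (c • xnb j - ε j • lam j))) :
    IsUnit A ∧ ∀ x, g x ≥ g xplus ∧ (g x = g xplus ↔ x = xplus) := by
  subst hJ hg
  have hApos : A.PosDef :=
    hA ▸ posDef_transpose_mul_self_add_smul_one Q (mul_pos hc (by exact_mod_cast hd))
  have hAx : A *ᵥ xplus = Qᵀ *ᵥ y + ∑ j, (c • xnb j - ε j • lam j) := by
    rw [hxplus, mulVec_mulVec, mul_nonsing_inv A ((isUnit_iff_isUnit_det A).mp hApos.isUnit),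
      one_mulVec]
  exact ⟨hApos.isUnit, hApos.le_and_eq_iff_of_eq_quadratic hAx
    (hA ▸ pdmm_objective_eq_quadratic Q y xnb lam ε c)⟩

/-- Equation (22) of the paper: the PDMM local primal update for distributed least squares.
With `εⱼ = ±1`, `c > 0` and `|J| = d ≥ 1`, the matrix `QᵀQ + (c·d) I` is invertible and the
local augmented Lagrangian
`g(x) = (1/2)‖y − Q x‖² + ∑ⱼ εⱼ ⟪λⱼ, x⟫ + (c/2) ∑ⱼ ‖x − xⱼ‖²` (Euclidean norms and inner
products) has the unique minimizer `x⁺ = (QᵀQ + c·d·I)⁻¹ (Qᵀ y + ∑ⱼ (c xⱼ − εⱼ λⱼ))`. -/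
theorem pdmm_least_squares_local_update {p u d : ℕ} (hd : 1 ≤ d)
    {J : Type*} [Fintype J] (hJ : Fintype.card J = d)
    (Q : Matrix (Fin p) (Fin u) ℝ) (y : Fin p → ℝ)
    (xnb lam : J → (Fin u → ℝ))
    (ε : J → ℝ) (hε : ∀ j, ε j ∈ ({1, -1} : Set ℝ)) (c : ℝ) (hc : 0 < c)
    (g : (Fin u → ℝ) → ℝ)
    (hg : g = fun x => 1 / 2 * ‖(WithLp.equiv 2 (Fin p → ℝ)).symm (y - Q.mulVec x)‖ ^ 2
      + ∑ j, ε j • ⟪(WithLp.equiv 2 (Fin u → ℝ)).symm (lam j),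
          (WithLp.equiv 2 (Fin u → ℝ)).symm x⟫
      + c / 2 * ∑ j, ‖(WithLp.equiv 2 (Fin u → ℝ)).symm (x - xnb j)‖ ^ 2)
    (A : Matrix (Fin u) (Fin u) ℝ)
    (hA : A = Qᵀ * Q + (c * d) • (1 : Matrix (Fin u) (Fin u) ℝ))
    (xplus : Fin u → ℝ)
    (hxplus : xplus = A⁻¹.mulVec (Qᵀ.mulVec y + ∑ j, (c • xnb j - ε j • lam j))) :
    IsUnit A ∧ ∀ x, g x ≥ g xplus ∧ (g x = g xplus ↔ x = xplus) :=
  pdmm_least_squares_local_update_general hd hJ Q y xnb lam ε c hc g hg A hA xplus hxplus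
end
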